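/- arXiv:1309.0832 — 3 statements merged into one kernel-verified Lean document; each statement's English description precedes it below -/
import Mathlib

section
/- Every permutation belonging to G1 or to G2 avoids both of the patterns 3124 and 4312; that is, G1 ∪ G2 ⊆ Av(3124,4312). -/
/-!  Common definitions: permutations in one-line notation (0-based values),
pattern containment, intervals, simplicity, sums, inflations, drawings on figures,
and counting functions. -/

/-- `l` is a permutation in one-line notation, using each of the values `0,…,n-1`
exactly once, where `n = l.length`. -/
def IsPermList (l : List ℕ) : Prop := List.Perm l (List.range l.length)

/-- `l` contains the pattern `p` (both in one-line notation). -/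
def Contains (l p : List ℕ) : Prop :=
  ∃ f : Fin p.length → Fin l.length, StrictMono f ∧
    ∀ a b : Fin p.length, p.get a < p.get b ↔ l.get (f a) < l.get (f b)

/-- `l` avoids the pattern `p`. -/
def Avoids (l p : List ℕ) : Prop := ¬ Contains l p

/-- The `k` consecutive indices `i,…,i+k-1` form an interval of `l`:
the corresponding entries form a set of consecutive integers. -/
def IsIntervalAt (l : List ℕ) (i k : ℕ) : Prop :=
  0 < k ∧ i + k ≤ l.length ∧
    ∃ m : ℕ, List.Perm ((l.drop i).take k) ((List.range k).map (· + m))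

/-- A permutation is simple if its only intervals have length `1` or `l.length`. -/
def IsSimple (l : List ℕ) : Prop :=
  ∀ i k, IsIntervalAt l i k → k = 1 ∨ k = l.length

/-- The (direct) sum `σ ⊕ τ`. -/
def psum (σ τ : List ℕ) : List ℕ := σ ++ τ.map (· + σ.length)

/-- The skew sum `σ ⊖ τ`. -/
def pskew (σ τ : List ℕ) : List ℕ := σ.map (· + τ.length) ++ τ

/-- `l` is sum decomposable. -/
def SumDecomposable (l : List ℕ) : Prop :=
  ∃ σ τ : List ℕ, IsPermList σ ∧ IsPermList τ ∧ σ ≠ [] ∧ τ ≠ [] ∧ l = psum σ τ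

/-- `l` is skew decomposable. -/
def SkewDecomposable (l : List ℕ) : Prop :=
  ∃ σ τ : List ℕ, IsPermList σ ∧ IsPermList τ ∧ σ ≠ [] ∧ τ ≠ [] ∧ l = pskew σ τ

/-- The inflation `σ[τ₁,…,τ_k]`: each entry `σ(i)` is replaced by a block
order-isomorphic to `τs[i]`, the blocks being mutually ordered as the entries of `σ`. -/
def inflation (σ : List ℕ) (τs : List (List ℕ)) : List ℕ :=
  ((List.range σ.length).map (fun i =>
    (τs.getD i []).map (· +
      (((List.range σ.length).filter (fun j => decide (σ.getD j 0 < σ.getD i 0))).map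
        (fun j => (τs.getD j []).length)).sum))).flatten

/-- `l = σ[τ₁,…,τ_k]` where the `τᵢ` are nonempty permutations. -/
def IsInflationOf (l σ : List ℕ) (τs : List (List ℕ)) : Prop :=
  τs.length = σ.length ∧ (∀ τ ∈ τs, IsPermList τ ∧ τ ≠ []) ∧ l = inflation σ τs

/-- `l` can be drawn on the plane figure `F`:  there are points of `F`, with pairwise
distinct x-coordinates, listed from left to right, whose y-coordinates are ordered
exactly as the entries of `l`. -/
def DrawnOn (l : List ℕ) (F : Set (ℝ × ℝ)) : Prop :=
  ∃ p : Fin l.length → ℝ × ℝ, (∀ i, p i ∈ F) ∧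
    (StrictMono fun i => (p i).1) ∧
    ∀ i j : Fin l.length, l.get i < l.get j ↔ (p i).2 < (p j).2

/-- The line segment between two points of the plane. -/
def seg (a b : ℝ × ℝ) : Set (ℝ × ℝ) := segment ℝ a b

/-- The standard figure of `G1`. -/
def G1fig : Set (ℝ × ℝ) :=
  seg (0,0) (1,1) ∪ seg (1,1) (2,2) ∪ seg (1,1) (2,0) ∪ seg (2,2) (3,1)

/-- The standard figure of `G2`. -/
def G2fig : Set (ℝ × ℝ) :=
  seg (0,0) (1,1) ∪ seg (1,1) (2,2) ∪ seg (2,3) (3,4) ∪ seg (3,2) (4,3) ∪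
    seg (2,2) (3,1) ∪ seg (3,1) (4,0)

/-- The standard figure of `G3`. -/
def G3fig : Set (ℝ × ℝ) :=
  seg (0,0) (1,1) ∪ seg (1,2) (2,3) ∪ seg (1,1) (2,0) ∪ {((5/2 : ℝ), (3/2 : ℝ))}

/-- The number of permutations of length `n` avoiding `3124` and `4312`. -/
noncomputable def avCount (n : ℕ) : ℕ :=
  {l : List ℕ | l.length = n ∧ IsPermList l ∧
    Avoids l [2,0,1,3] ∧ Avoids l [3,2,0,1]}.ncard

/-- The number of simple permutations of length `n` avoiding `3124` and `4312`. -/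
noncomputable def simpleAvCount (n : ℕ) : ℕ :=
  {l : List ℕ | l.length = n ∧ IsPermList l ∧ IsSimple l ∧
    Avoids l [2,0,1,3] ∧ Avoids l [3,2,0,1]}.ncard

/-- The number of permutations of length `n` in the class `G1`. -/
noncomputable def g1Count (n : ℕ) : ℕ :=
  {l : List ℕ | l.length = n ∧ IsPermList l ∧ DrawnOn l G1fig}.ncard

/-- The number of permutations of length `n` in the class `G2`. -/
noncomputable def g2Count (n : ℕ) : ℕ :=
  {l : List ℕ | l.length = n ∧ IsPermList l ∧ DrawnOn l G2fig}.ncard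

/-- The number of permutations of length `n` in the class `G3`. -/
noncomputable def g3Count (n : ℕ) : ℕ :=
  {l : List ℕ | l.length = n ∧ IsPermList l ∧ DrawnOn l G3fig}.ncard

/-- The number of simple permutations of length `n` in the class `G1`. -/
noncomputable def simpleG1Count (n : ℕ) : ℕ :=
  {l : List ℕ | l.length = n ∧ IsPermList l ∧ IsSimple l ∧ DrawnOn l G1fig}.ncard

/-- The number of simple permutations of length `n` in the class `G2`. -/
noncomputable def simpleG2Count (n : ℕ) : ℕ :=
  {l : List ℕ | l.length = n ∧ IsPermList l ∧ IsSimple l ∧ DrawnOn l G2fig}.ncard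

/-- The number of simple permutations of length `n` in the class `G3`. -/
noncomputable def simpleG3Count (n : ℕ) : ℕ :=
  {l : List ℕ | l.length = n ∧ IsPermList l ∧ IsSimple l ∧ DrawnOn l G3fig}.ncard

/-- The number of sum decomposable permutations of length `n` avoiding `3124` and `4312`. -/
noncomputable def sumDecAvCount (n : ℕ) : ℕ :=
  {l : List ℕ | l.length = n ∧ IsPermList l ∧ SumDecomposable l ∧
    Avoids l [2,0,1,3] ∧ Avoids l [3,2,0,1]}.ncard

/-- The number of skew decomposable permutations of length `n` avoiding `3124` and `4312`. -/
noncomputable def skewDecAvCount (n : ℕ) : ℕ :=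
  {l : List ℕ | l.length = n ∧ IsPermList l ∧ SkewDecomposable l ∧
    Avoids l [2,0,1,3] ∧ Avoids l [3,2,0,1]}.ncard

/-! Drawability on a figure passes from a permutation to every pattern it contains, so it
suffices that neither `3124` nor `4312` can be drawn on `G1fig` or on `G2fig`. Each figure
lies on a few line pieces `y = ±x + c`; once each of the four points of a putative drawing is
assigned to a piece, the order constraints of the pattern become a linear system with no
solution. -/

open Set

lemma DrawnOn.of_contains {l p : List ℕ} {F : Set (ℝ × ℝ)} (hl : DrawnOn l F)
    (hp : Contains l p) : DrawnOn p F := by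
  obtain ⟨q, hqF, hqx, hqy⟩ := hl
  obtain ⟨f, hf, hfp⟩ := hp
  exact ⟨q ∘ f, fun i => hqF (f i), hqx.comp hf, fun a b => (hfp a b).trans (hqy _ _)⟩

lemma DrawnOn.avoids {l p : List ℕ} {F : Set (ℝ × ℝ)} (hl : DrawnOn l F)
    (hp : ¬ DrawnOn p F) : Avoids l p :=
  fun hc => hp (hl.of_contains hc)

lemma DrawnOn.exists_3124 {F : Set (ℝ × ℝ)} (h : DrawnOn [2,0,1,3] F) :
    ∃ a ∈ F, ∃ b ∈ F, ∃ c ∈ F, ∃ d ∈ F, a.1 < b.1 ∧ b.1 < c.1 ∧ c.1 < d.1 ∧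
      b.2 < c.2 ∧ c.2 < a.2 ∧ a.2 < d.2 := by
  obtain ⟨q, hqF, hqx, hqy⟩ := h
  exact ⟨q 0, hqF _, q 1, hqF _, q 2, hqF _, q 3, hqF _,
    hqx (by decide), hqx (by decide), hqx (by decide),
    (hqy 1 2).1 (by decide), (hqy 2 0).1 (by decide), (hqy 0 3).1 (by decide)⟩

lemma DrawnOn.exists_4312 {F : Set (ℝ × ℝ)} (h : DrawnOn [3,2,0,1] F) :
    ∃ a ∈ F, ∃ b ∈ F, ∃ c ∈ F, ∃ d ∈ F, a.1 < b.1 ∧ b.1 < c.1 ∧ c.1 < d.1 ∧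
      c.2 < d.2 ∧ d.2 < b.2 ∧ b.2 < a.2 := by
  obtain ⟨q, hqF, hqx, hqy⟩ := h
  exact ⟨q 0, hqF _, q 1, hqF _, q 2, hqF _, q 3, hqF _,
    hqx (by decide), hqx (by decide), hqx (by decide),
    (hqy 2 3).1 (by decide), (hqy 3 1).1 (by decide), (hqy 1 0).1 (by decide)⟩

lemma exists_of_mem_seg {a b p : ℝ × ℝ} (h : p ∈ seg a b) :
    ∃ t ∈ Icc (0 : ℝ) 1, p.1 = (1 - t) * a.1 + t * b.1 ∧ p.2 = (1 - t) * a.2 + t * b.2 := by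
  rw [seg, segment_eq_image] at h
  obtain ⟨t, ht, rfl⟩ := h
  exact ⟨t, ht, by simp, by simp⟩

lemma mem_G1fig {p : ℝ × ℝ} (h : p ∈ G1fig) :
    (p.2 = p.1 ∧ 0 ≤ p.1 ∧ p.1 ≤ 2) ∨ (p.2 = 2 - p.1 ∧ 1 ≤ p.1 ∧ p.1 ≤ 2) ∨
      (p.2 = 4 - p.1 ∧ 2 ≤ p.1 ∧ p.1 ≤ 3) := by
  rcases h with ((h | h) | h) | h <;> obtain ⟨t, ⟨ht0, ht1⟩, hx, hy⟩ := exists_of_mem_seg h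
  · exact Or.inl ⟨by linarith, by linarith, by linarith⟩
  · exact Or.inl ⟨by linarith, by linarith, by linarith⟩
  · exact Or.inr (Or.inl ⟨by linarith, by linarith, by linarith⟩)
  · exact Or.inr (Or.inr ⟨by linarith, by linarith, by linarith⟩)

lemma mem_G2fig {p : ℝ × ℝ} (h : p ∈ G2fig) :
    (p.2 = p.1 ∧ 0 ≤ p.1 ∧ p.1 ≤ 2) ∨ (p.2 = p.1 + 1 ∧ 2 ≤ p.1 ∧ p.1 ≤ 3) ∨
      (p.2 = p.1 - 1 ∧ 3 ≤ p.1 ∧ p.1 ≤ 4) ∨ (p.2 = 4 - p.1 ∧ 2 ≤ p.1 ∧ p.1 ≤ 4) := by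
  rcases h with ((((h | h) | h) | h) | h) | h <;>
    obtain ⟨t, ⟨ht0, ht1⟩, hx, hy⟩ := exists_of_mem_seg h
  · exact Or.inl ⟨by linarith, by linarith, by linarith⟩
  · exact Or.inl ⟨by linarith, by linarith, by linarith⟩
  · exact Or.inr (Or.inl ⟨by linarith, by linarith, by linarith⟩)
  · exact Or.inr (Or.inr (Or.inl ⟨by linarith, by linarith, by linarith⟩))
  · exact Or.inr (Or.inr (Or.inr ⟨by linarith, by linarith, by linarith⟩))
  · exact Or.inr (Or.inr (Or.inr ⟨by linarith, by linarith, by linarith⟩))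

lemma not_drawnOn_3124_G1fig : ¬ DrawnOn [2,0,1,3] G1fig := by
  intro h
  obtain ⟨a, ha, b, hb, c, hc, d, hd, x1, x2, x3, y1, y2, y3⟩ := h.exists_3124
  rcases mem_G1fig ha with ⟨e1, f1, g1⟩ | ⟨e1, f1, g1⟩ | ⟨e1, f1, g1⟩ <;>
  rcases mem_G1fig hb with ⟨e2, f2, g2⟩ | ⟨e2, f2, g2⟩ | ⟨e2, f2, g2⟩ <;>
  rcases mem_G1fig hc with ⟨e3, f3, g3⟩ | ⟨e3, f3, g3⟩ | ⟨e3, f3, g3⟩ <;>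
  rcases mem_G1fig hd with ⟨e4, f4, g4⟩ | ⟨e4, f4, g4⟩ | ⟨e4, f4, g4⟩ <;>
  linarith

lemma not_drawnOn_4312_G1fig : ¬ DrawnOn [3,2,0,1] G1fig := by
  intro h
  obtain ⟨a, ha, b, hb, c, hc, d, hd, x1, x2, x3, y1, y2, y3⟩ := h.exists_4312
  rcases mem_G1fig ha with ⟨e1, f1, g1⟩ | ⟨e1, f1, g1⟩ | ⟨e1, f1, g1⟩ <;>
  rcases mem_G1fig hb with ⟨e2, f2, g2⟩ | ⟨e2, f2, g2⟩ | ⟨e2, f2, g2⟩ <;>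
  rcases mem_G1fig hc with ⟨e3, f3, g3⟩ | ⟨e3, f3, g3⟩ | ⟨e3, f3, g3⟩ <;>
  rcases mem_G1fig hd with ⟨e4, f4, g4⟩ | ⟨e4, f4, g4⟩ | ⟨e4, f4, g4⟩ <;>
  linarith

lemma not_drawnOn_3124_G2fig : ¬ DrawnOn [2,0,1,3] G2fig := by
  intro h
  obtain ⟨a, ha, b, hb, c, hc, d, hd, x1, x2, x3, y1, y2, y3⟩ := h.exists_3124
  rcases mem_G2fig ha with ⟨e1, f1, g1⟩ | ⟨e1, f1, g1⟩ | ⟨e1, f1, g1⟩ | ⟨e1, f1, g1⟩ <;>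
  rcases mem_G2fig hb with ⟨e2, f2, g2⟩ | ⟨e2, f2, g2⟩ | ⟨e2, f2, g2⟩ | ⟨e2, f2, g2⟩ <;>
  rcases mem_G2fig hc with ⟨e3, f3, g3⟩ | ⟨e3, f3, g3⟩ | ⟨e3, f3, g3⟩ | ⟨e3, f3, g3⟩ <;>
  rcases mem_G2fig hd with ⟨e4, f4, g4⟩ | ⟨e4, f4, g4⟩ | ⟨e4, f4, g4⟩ | ⟨e4, f4, g4⟩ <;>
  linarith

lemma not_drawnOn_4312_G2fig : ¬ DrawnOn [3,2,0,1] G2fig := by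
  intro h
  obtain ⟨a, ha, b, hb, c, hc, d, hd, x1, x2, x3, y1, y2, y3⟩ := h.exists_4312
  rcases mem_G2fig ha with ⟨e1, f1, g1⟩ | ⟨e1, f1, g1⟩ | ⟨e1, f1, g1⟩ | ⟨e1, f1, g1⟩ <;>
  rcases mem_G2fig hb with ⟨e2, f2, g2⟩ | ⟨e2, f2, g2⟩ | ⟨e2, f2, g2⟩ | ⟨e2, f2, g2⟩ <;>
  rcases mem_G2fig hc with ⟨e3, f3, g3⟩ | ⟨e3, f3, g3⟩ | ⟨e3, f3, g3⟩ | ⟨e3, f3, g3⟩ <;>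
  rcases mem_G2fig hd with ⟨e4, f4, g4⟩ | ⟨e4, f4, g4⟩ | ⟨e4, f4, g4⟩ | ⟨e4, f4, g4⟩ <;>
  linarith

theorem g1_union_g2_subset_av_general (l : List ℕ)
    (h : DrawnOn l G1fig ∨ DrawnOn l G2fig) :
    Avoids l [2,0,1,3] ∧ Avoids l [3,2,0,1] := by
  rcases h with hD | hD
  · exact ⟨hD.avoids not_drawnOn_3124_G1fig, hD.avoids not_drawnOn_4312_G1fig⟩
  · exact ⟨hD.avoids not_drawnOn_3124_G2fig, hD.avoids not_drawnOn_4312_G2fig⟩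

/-- every permutation of `G1 ∪ G2` avoids `3124` and `4312`. -/
theorem g1_union_g2_subset_av (l : List ℕ) (hl : IsPermList l)
    (h : DrawnOn l G1fig ∨ DrawnOn l G2fig) :
    Avoids l [2,0,1,3] ∧ Avoids l [3,2,0,1] :=
  g1_union_g2_subset_av_general l h
end

section
/- The class G3 is the intersection of the classes G1 and G2; that is, a permutation can be drawn on the figure defining G3 if and only if it can be drawn on both the figure defining G1 and the figure defining G2. -/
/-!
`G3 ⊆ G1 ∩ G2`: the figure of `G3` is carried into each of the two other figures by a map
`(x, y) ↦ (f x, g y)` with `f` and `g` strictly increasing, and such a map transports drawings.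

`G1 ∩ G2 ⊆ G3`: a drawing on one of these figures amounts to a *gridding*, a cover of the
positions by pieces, one per segment, each piece monotone in the direction of its segment and the
pieces ordered from left to right and from bottom to top as their segments are. A `G3` gridding
is read off from the `G1` or the `G2` gridding, except when `G1` uses its last segment `D₁`, `G2`
uses its upper segment `BH`, and some point other than the last one lies on `BT`. Then the last
point `z` lies on `D₁` and on `BT` or `CT`. If `z ∈ BT`, then `z` is the only point of `D₁` and lies
below `B₁`, so the `G1` gridding is already one for `G3`. If `z ∈ CT`, the whole tail `BT ∪ CT` of
`G2` lies in `D₁` and is therefore decreasing, and `A = E ∪ CH`, `B = BH`, `C = BT ∪ CT` is a `G3`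
gridding. A `G3` gridding is then drawn explicitly.
-/

theorem mem_seg_iff {a b c d : ℝ} (hac : a < c) {P : ℝ × ℝ} :
    P ∈ seg (a, b) (c, d) ↔ a ≤ P.1 ∧ P.1 ≤ c ∧ (P.2 - b) * (c - a) = (d - b) * (P.1 - a) := by
  rw [seg, segment_eq_image']
  constructor
  · rintro ⟨t, ⟨ht0, ht1⟩, rfl⟩
    simp only [Prod.fst_add, Prod.snd_add, Prod.smul_fst, Prod.smul_snd, Prod.fst_sub,
      Prod.snd_sub, smul_eq_mul]
    exact ⟨by nlinarith, by nlinarith, by ring⟩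
  · rintro ⟨h1, h2, h⟩
    have hca : 0 < c - a := sub_pos.2 hac
    refine ⟨(P.1 - a) / (c - a), ⟨div_nonneg (by linarith) hca.le,
      (div_le_one hca).2 (by linarith)⟩, Prod.ext ?_ ?_⟩
    · simp only [Prod.fst_add, Prod.smul_fst, Prod.fst_sub, smul_eq_mul]
      field_simp; ring
    · simp only [Prod.snd_add, Prod.smul_snd, Prod.snd_sub, smul_eq_mul]
      field_simp; linarith

theorem mem_G1fig_s3 {P : ℝ × ℝ} : P ∈ G1fig ↔ (P.2 = P.1 ∧ 0 ≤ P.1 ∧ P.1 ≤ 2) ∨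
    (P.2 = 2 - P.1 ∧ 1 ≤ P.1 ∧ P.1 ≤ 2) ∨ (P.2 = 4 - P.1 ∧ 2 ≤ P.1 ∧ P.1 ≤ 3) := by
  simp (disch := norm_num) only [G1fig, Set.mem_union, mem_seg_iff]
  grind

theorem mem_G2fig_s3 {P : ℝ × ℝ} : P ∈ G2fig ↔ (P.2 = P.1 ∧ 0 ≤ P.1 ∧ P.1 ≤ 2) ∨
    (P.2 = P.1 + 1 ∧ 2 ≤ P.1 ∧ P.1 ≤ 3) ∨ (P.2 = P.1 - 1 ∧ 3 ≤ P.1 ∧ P.1 ≤ 4) ∨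
    (P.2 = 4 - P.1 ∧ 2 ≤ P.1 ∧ P.1 ≤ 4) := by
  simp (disch := norm_num) only [G2fig, Set.mem_union, mem_seg_iff]
  grind

theorem mem_G3fig {P : ℝ × ℝ} : P ∈ G3fig ↔ (P.2 = P.1 ∧ 0 ≤ P.1 ∧ P.1 ≤ 1) ∨
    (P.2 = P.1 + 1 ∧ 1 ≤ P.1 ∧ P.1 ≤ 2) ∨ (P.2 = 2 - P.1 ∧ 1 ≤ P.1 ∧ P.1 ≤ 2) ∨
    P = (5 / 2, 3 / 2) := by
  simp (disch := norm_num) only [G3fig, Set.mem_union, Set.mem_singleton_iff, mem_seg_iff]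
  grind

theorem DrawnOn.map_of_strictMono {l : List ℕ} {F F' : Set (ℝ × ℝ)} {f g : ℝ → ℝ}
    (hf : StrictMono f) (hg : StrictMono g) (hF : ∀ P ∈ F, (f P.1, g P.2) ∈ F')
    (h : DrawnOn l F) : DrawnOn l F' := by
  obtain ⟨p, hp, hx, hy⟩ := h
  exact ⟨fun i => (f (p i).1, g (p i).2), fun i => hF _ (hp i), hf.comp hx,
    fun i j => (hy i j).trans hg.lt_iff_lt.symm⟩

/- The corner `(1, 1)` of `G3fig` is sent with its decreasing segment, which is why `x = 1`
falls in the middle branch of `toG1x` and `toG2x`. -/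
noncomputable def toG1x (x : ℝ) : ℝ :=
  if x < 1 then x / 2 else if x ≤ 2 then 1 + x / 2 else x + 1 / 2

noncomputable def toG1y (y : ℝ) : ℝ :=
  if y ≤ 1 then y / 2 else if y ≤ 2 then y - 1 / 2 else (y + 1) / 2

noncomputable def toG2x (x : ℝ) : ℝ :=
  if x < 1 then 1 + x / 2 else if x ≤ 2 then 2 + x / 2 else x + 1

noncomputable def toG2y (y : ℝ) : ℝ :=
  if y ≤ 1 then 1 + y / 2 else if y ≤ 2 then 2 * y - 1 / 2 else (y + 5) / 2

theorem strictMono_toG1x : StrictMono toG1x := fun a b h => by unfold toG1x; split_ifs <;> linarith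
theorem strictMono_toG1y : StrictMono toG1y := fun a b h => by unfold toG1y; split_ifs <;> linarith
theorem strictMono_toG2x : StrictMono toG2x := fun a b h => by unfold toG2x; split_ifs <;> linarith
theorem strictMono_toG2y : StrictMono toG2y := fun a b h => by unfold toG2y; split_ifs <;> linarith

theorem toG1_mem {P : ℝ × ℝ} (h : P ∈ G3fig) : (toG1x P.1, toG1y P.2) ∈ G1fig := by
  rw [mem_G3fig] at h
  rw [mem_G1fig_s3]
  unfold toG1x toG1y
  grind

theorem toG2_mem {P : ℝ × ℝ} (h : P ∈ G3fig) : (toG2x P.1, toG2y P.2) ∈ G2fig := by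
  rw [mem_G3fig] at h
  rw [mem_G2fig_s3]
  unfold toG2x toG2y
  grind

/-- The pieces are the parts of `G1fig` on the lines `y = x` (`A` for `x ≤ 1`, `B` for `x > 1`),
`y = 2 - x` (`C`) and `y = 4 - x` (`D`). -/
structure G1Gridding (l : List ℕ) where
  A : Fin l.length → Prop
  B : Fin l.length → Prop
  C : Fin l.length → Prop
  D : Fin l.length → Prop
  cover : ∀ i, A i ∨ B i ∨ C i ∨ D i
  A_before : ∀ {i j}, A i → B j ∨ C j ∨ D j → i < j
  before_D : ∀ {i j}, A i ∨ B i ∨ C i → D j → i < j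
  A_mono : ∀ {i j}, i < j → A i → A j → l.get i < l.get j
  B_mono : ∀ {i j}, i < j → B i → B j → l.get i < l.get j
  C_anti : ∀ {i j}, i < j → C i → C j → l.get j < l.get i
  D_anti : ∀ {i j}, i < j → D i → D j → l.get j < l.get i
  low_lt_high : ∀ {i j}, A i ∨ C i → B j ∨ D j → l.get i < l.get j

/-- The pieces are the parts of `G2fig` on the lines `y = x` (`E`), `y = x + 1` (`BH`),
`y = x - 1` (`BT`) and `y = 4 - x` (`CH` for `x < 3`, `CT` for `x ≥ 3`). -/
structure G2Gridding (l : List ℕ) where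
  E : Fin l.length → Prop
  BH : Fin l.length → Prop
  CH : Fin l.length → Prop
  BT : Fin l.length → Prop
  CT : Fin l.length → Prop
  cover : ∀ i, E i ∨ BH i ∨ CH i ∨ BT i ∨ CT i
  E_before : ∀ {i j}, E i → BH j ∨ CH j ∨ BT j ∨ CT j → i < j
  head_before_tail : ∀ {i j}, BH i ∨ CH i → BT j ∨ CT j → i < j
  E_mono : ∀ {i j}, i < j → E i → E j → l.get i < l.get j
  BH_mono : ∀ {i j}, i < j → BH i → BH j → l.get i < l.get j
  BT_mono : ∀ {i j}, i < j → BT i → BT j → l.get i < l.get j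
  CH_anti : ∀ {i j}, i < j → CH i → CH j → l.get j < l.get i
  CT_anti : ∀ {i j}, i < j → CT i → CT j → l.get j < l.get i
  CT_lt_CH : ∀ {i j}, CT i → CH j → l.get i < l.get j
  CT_lt_BT : ∀ {i j}, CT i → BT j → l.get i < l.get j
  CT_lt_BH : ∀ {i j}, CT i → BH j → l.get i < l.get j
  CH_lt_BT : ∀ {i j}, CH i → BT j → l.get i < l.get j
  CH_lt_BH : ∀ {i j}, CH i → BH j → l.get i < l.get j
  E_lt_BT : ∀ {i j}, E i → BT j → l.get i < l.get j
  E_lt_BH : ∀ {i j}, E i → BH j → l.get i < l.get j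
  BT_lt_BH : ∀ {i j}, BT i → BH j → l.get i < l.get j

/-- The pieces are the parts of `G3fig` on the lines `y = x` (`A`), `y = x + 1` (`B`) and
`y = 2 - x` (`C`), and the isolated point (`D`). -/
structure G3Gridding (l : List ℕ) where
  A : Fin l.length → Prop
  B : Fin l.length → Prop
  C : Fin l.length → Prop
  D : Fin l.length → Prop
  cover : ∀ i, A i ∨ B i ∨ C i ∨ D i
  A_before : ∀ {i j}, A i → B j ∨ C j ∨ D j → i < j
  before_D : ∀ {i j}, A i ∨ B i ∨ C i → D j → i < j
  D_subsingleton : ∀ {i j}, D i → D j → i = j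
  A_mono : ∀ {i j}, i < j → A i → A j → l.get i < l.get j
  B_mono : ∀ {i j}, i < j → B i → B j → l.get i < l.get j
  C_anti : ∀ {i j}, i < j → C i → C j → l.get j < l.get i
  low_lt_high : ∀ {i j}, A i ∨ C i → B j ∨ D j → l.get i < l.get j
  D_lt_B : ∀ {i j}, D i → B j → l.get i < l.get j

structure Drawing (l : List ℕ) (F : Set (ℝ × ℝ)) where
  pt : Fin l.length → ℝ × ℝ
  mem : ∀ i, pt i ∈ F
  strictMono_fst : StrictMono fun i => (pt i).1
  get_lt_get_iff : ∀ i j, l.get i < l.get j ↔ (pt i).2 < (pt j).2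

theorem drawnOn_iff_nonempty_drawing {l : List ℕ} {F : Set (ℝ × ℝ)} :
    DrawnOn l F ↔ Nonempty (Drawing l F) :=
  ⟨fun ⟨p, hp, hx, hy⟩ => ⟨⟨p, hp, hx, hy⟩⟩,
    fun ⟨d⟩ => ⟨d.pt, d.mem, d.strictMono_fst, d.get_lt_get_iff⟩⟩

namespace Drawing

variable {l : List ℕ} {F : Set (ℝ × ℝ)} (d : Drawing l F) {i j : Fin l.length}

theorem lt_of_fst_le (h : (d.pt i).1 ≤ (d.pt j).1) (hij : i ≠ j) : i < j :=
  lt_of_le_of_ne (d.strictMono_fst.le_iff_le.1 h) hij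

theorem get_lt_of_snd_le (hl : l.Nodup) (h : (d.pt i).2 ≤ (d.pt j).2) (hij : i ≠ j) :
    l.get i < l.get j :=
  lt_of_le_of_ne (not_lt.1 fun h' => ((d.get_lt_get_iff j i).1 h').not_ge h)
    fun h' => hij (List.nodup_iff_injective_get.1 hl h')

def toG1Gridding (d : Drawing l G1fig) (hl : l.Nodup) : G1Gridding l where
  A i := (d.pt i).2 = (d.pt i).1 ∧ (d.pt i).1 ≤ 1
  B i := (d.pt i).2 = (d.pt i).1 ∧ 1 < (d.pt i).1 ∧ (d.pt i).1 ≤ 2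
  C i := (d.pt i).2 = 2 - (d.pt i).1 ∧ 1 < (d.pt i).1 ∧ (d.pt i).1 ≤ 2
  D i := (d.pt i).2 = 4 - (d.pt i).1 ∧ 2 < (d.pt i).1 ∧ (d.pt i).1 ≤ 3
  cover i := by grind [mem_G1fig_s3.1 (d.mem i)]
  A_before hi hj := d.lt_of_fst_le (by grind) (by grind)
  before_D hi hj := d.lt_of_fst_le (by grind) (by grind)
  A_mono hij hi hj := (d.get_lt_get_iff _ _).2 (by grind [d.strictMono_fst hij])
  B_mono hij hi hj := (d.get_lt_get_iff _ _).2 (by grind [d.strictMono_fst hij])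
  C_anti hij hi hj := (d.get_lt_get_iff _ _).2 (by grind [d.strictMono_fst hij])
  D_anti hij hi hj := (d.get_lt_get_iff _ _).2 (by grind [d.strictMono_fst hij])
  low_lt_high hi hj := d.get_lt_of_snd_le hl (by grind) (by grind)

def toG2Gridding (d : Drawing l G2fig) (hl : l.Nodup) : G2Gridding l where
  E i := (d.pt i).2 = (d.pt i).1 ∧ (d.pt i).1 ≤ 2
  BH i := (d.pt i).2 = (d.pt i).1 + 1 ∧ 2 ≤ (d.pt i).1 ∧ (d.pt i).1 ≤ 3
  CH i := (d.pt i).2 = 4 - (d.pt i).1 ∧ 2 < (d.pt i).1 ∧ (d.pt i).1 < 3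
  BT i := (d.pt i).2 = (d.pt i).1 - 1 ∧ 3 ≤ (d.pt i).1 ∧ (d.pt i).1 ≤ 4
  CT i := (d.pt i).2 = 4 - (d.pt i).1 ∧ 3 ≤ (d.pt i).1
  cover i := by grind [mem_G2fig_s3.1 (d.mem i)]
  E_before hi hj := d.lt_of_fst_le (by grind) (by grind)
  head_before_tail hi hj := d.lt_of_fst_le (by grind) (by grind)
  E_mono hij hi hj := (d.get_lt_get_iff _ _).2 (by grind [d.strictMono_fst hij])
  BH_mono hij hi hj := (d.get_lt_get_iff _ _).2 (by grind [d.strictMono_fst hij])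
  BT_mono hij hi hj := (d.get_lt_get_iff _ _).2 (by grind [d.strictMono_fst hij])
  CH_anti hij hi hj := (d.get_lt_get_iff _ _).2 (by grind [d.strictMono_fst hij])
  CT_anti hij hi hj := (d.get_lt_get_iff _ _).2 (by grind [d.strictMono_fst hij])
  CT_lt_CH hi hj := d.get_lt_of_snd_le hl (by grind) (by grind)
  CT_lt_BT hi hj := d.get_lt_of_snd_le hl (by grind) (by grind)
  CT_lt_BH hi hj := d.get_lt_of_snd_le hl (by grind) (by grind)
  CH_lt_BT hi hj := d.get_lt_of_snd_le hl (by grind) (by grind)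
  CH_lt_BH hi hj := d.get_lt_of_snd_le hl (by grind) (by grind)
  E_lt_BT hi hj := d.get_lt_of_snd_le hl (by grind) (by grind)
  E_lt_BH hi hj := d.get_lt_of_snd_le hl (by grind) (by grind)
  BT_lt_BH hi hj := d.get_lt_of_snd_le hl (by grind) (by grind)

end Drawing

namespace G1Gridding

variable {l : List ℕ} (g : G1Gridding l) {i j : Fin l.length}

theorem D_of_le (hi : g.D i) (hij : i ≤ j) : g.D j := by
  rcases g.cover j with hj | hj | hj | hj
  · exact absurd (g.before_D (Or.inl hj) hi) hij.not_gt
  · exact absurd (g.before_D (Or.inr (Or.inl hj)) hi) hij.not_gt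
  · exact absurd (g.before_D (Or.inr (Or.inr hj)) hi) hij.not_gt
  · exact hj

theorem get_lt_of_lt_of_B (hij : i < j) (hj : g.B j) : l.get i < l.get j := by
  rcases g.cover i with hi | hi | hi | hi
  · exact g.low_lt_high (Or.inl hi) (Or.inl hj)
  · exact g.B_mono hij hi hj
  · exact g.low_lt_high (Or.inr hi) (Or.inl hj)
  · exact absurd (g.before_D (Or.inr (Or.inl hj)) (g.D_of_le hi hij.le)) (lt_irrefl j)

theorem B_or_D_of_get_lt (hi : g.D i) (h : l.get i < l.get j) : g.B j ∨ g.D j := by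
  rcases g.cover j with hj | hj | hj | hj
  · exact absurd (g.low_lt_high (Or.inl hj) (Or.inr hi)) h.not_gt
  · exact Or.inl hj
  · exact absurd (g.low_lt_high (Or.inr hj) (Or.inr hi)) h.not_gt
  · exact Or.inr hj

end G1Gridding

theorem G2Gridding.CH_or_CT_anti {l : List ℕ} (g : G2Gridding l) {i j : Fin l.length}
    (hij : i < j) (hi : g.CH i ∨ g.CT i) (hj : g.CH j ∨ g.CT j) : l.get j < l.get i := by
  rcases hi with hi | hi <;> rcases hj with hj | hj
  · exact g.CH_anti hij hi hj
  · exact g.CT_lt_CH hj hi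
  · exact absurd (g.head_before_tail (Or.inr hj) (Or.inr hi)) hij.not_gt
  · exact g.CT_anti hij hi hj

namespace G3Gridding

variable {l : List ℕ}

def ofG1 (g : G1Gridding l) (hD : ∀ {i j}, g.D i → g.D j → i = j)
    (hDB : ∀ {i j}, g.D i → g.B j → l.get i < l.get j) : G3Gridding l where
  A := g.A
  B := g.B
  C := g.C
  D := g.D
  cover := g.cover
  A_before := g.A_before
  before_D := g.before_D
  D_subsingleton := hD
  A_mono := g.A_mono
  B_mono := g.B_mono
  C_anti := g.C_anti
  low_lt_high := g.low_lt_high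
  D_lt_B := hDB

def ofG2OfNoBH (g : G2Gridding l) (hBH : ∀ i, ¬ g.BH i) : G3Gridding l where
  A := g.E
  B := g.BT
  C i := g.CH i ∨ g.CT i
  D _ := False
  cover i := by have := g.cover i; have := hBH i; tauto
  A_before hi hj := g.E_before hi (by tauto)
  before_D _ := False.elim
  D_subsingleton := False.elim
  A_mono := g.E_mono
  B_mono := g.BT_mono
  C_anti := g.CH_or_CT_anti
  low_lt_high hi hj := by
    replace hj := hj.resolve_right id
    rcases hi with hi | hi | hi
    exacts [g.E_lt_BT hi hj, g.CH_lt_BT hi hj, g.CT_lt_BT hi hj]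
  D_lt_B := False.elim

def ofG2OfBTLast (g : G2Gridding l) (hBT : ∀ {i j}, g.BT j → i ≤ j) : G3Gridding l where
  A := g.E
  B := g.BH
  C i := g.CH i ∨ g.CT i
  D := g.BT
  cover i := by have := g.cover i; tauto
  A_before hi hj := g.E_before hi (by tauto)
  before_D {i j} hi hj := by
    refine lt_of_le_of_ne (hBT hj) ?_
    rintro rfl
    rcases hi with hi | hi | hi | hi
    exacts [(g.E_lt_BT hi hj).false, (g.BT_lt_BH hj hi).false, (g.CH_lt_BT hi hj).false,
      (g.CT_lt_BT hi hj).false]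
  D_subsingleton hi hj := le_antisymm (hBT hj) (hBT hi)
  A_mono := g.E_mono
  B_mono := g.BH_mono
  C_anti := g.CH_or_CT_anti
  low_lt_high := by
    rintro i j (hi | hi | hi) (hj | hj)
    exacts [g.E_lt_BH hi hj, g.E_lt_BT hi hj, g.CH_lt_BH hi hj, g.CH_lt_BT hi hj,
      g.CT_lt_BH hi hj, g.CT_lt_BT hi hj]
  D_lt_B := g.BT_lt_BH

def ofLastBT (g₁ : G1Gridding l) (g₂ : G2Gridding l) {z b j : Fin l.length} (hz : ∀ i, i ≤ z)
    (hzD : g₁.D z) (hzBT : g₂.BT z) (hb : g₂.BH b) (hj : g₂.BT j) (hjz : j ≠ z) :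
    G3Gridding l := by
  have hjz' : j < z := lt_of_le_of_ne (hz j) hjz
  have hjD : ¬ g₁.D j := fun h => (g₁.D_anti hjz' h hzD).not_gt (g₂.BT_mono hjz' hj hzBT)
  have hbj := g₂.head_before_tail (Or.inl hb) (Or.inl hj)
  have hjB : ¬ g₁.B j := fun h => (g₂.BT_lt_BH hj hb).not_gt (g₁.get_lt_of_lt_of_B hbj h)
  have below_j : ∀ {w}, g₁.B w → ¬ l.get w < l.get j := fun hw =>
    (g₁.low_lt_high (by have := g₁.cover j; tauto) (Or.inl hw)).not_gt
  have eq_z : ∀ {d}, g₁.D d → d = z := by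
    intro d hd
    by_contra hdz
    have hdz' : d < z := lt_of_le_of_ne (hz d) hdz
    have hzd := g₁.D_anti hdz' hd hzD
    rcases g₂.cover d with h | h | h | h | h
    · exact (g₂.E_lt_BT h hzBT).not_gt hzd
    · exact hjD (g₁.D_of_le hd (g₂.head_before_tail (Or.inl h) (Or.inl hj)).le)
    · exact hjD (g₁.D_of_le hd (g₂.head_before_tail (Or.inr h) (Or.inl hj)).le)
    · exact (g₂.BT_mono hdz' h hzBT).not_gt hzd
    · exact (g₂.CT_lt_BT h hzBT).not_gt hzd
  refine ofG1 g₁ (fun hd hd' => (eq_z hd).trans (eq_z hd').symm) fun {d w} hd hw => ?_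
  rw [eq_z hd]
  rcases g₂.cover w with h | h | h | h | h
  · exact absurd (g₂.E_lt_BT h hj) (below_j hw)
  · exact g₂.BT_lt_BH hzBT h
  · exact absurd (g₂.CH_lt_BT h hj) (below_j hw)
  · exact absurd (g₂.BT_lt_BH h hb)
      (g₁.get_lt_of_lt_of_B (g₂.head_before_tail (Or.inl hb) (Or.inl h)) hw).not_gt
  · exact absurd (g₂.CT_lt_BT h hj) (below_j hw)

def ofTailInD (g₁ : G1Gridding l) (g₂ : G2Gridding l)
    (tail_D : ∀ {w}, g₂.BT w ∨ g₂.CT w → g₁.D w)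
    (CH_before_BH : ∀ {w b}, g₂.CH w → g₂.BH b → w < b)
    (CH_B : ∀ {w}, g₂.CH w → g₁.B w) : G3Gridding l where
  A i := g₂.E i ∨ g₂.CH i
  B := g₂.BH
  C i := g₂.BT i ∨ g₂.CT i
  D _ := False
  cover i := by have := g₂.cover i; tauto
  A_before := by
    rintro i j (hi | hi) hj
    · exact g₂.E_before hi (by tauto)
    · rcases hj with hj | hj | hj
      exacts [CH_before_BH hi hj, g₂.head_before_tail (Or.inr hi) hj, hj.elim]
  before_D _ h := h.elim
  D_subsingleton h _ := h.elim
  A_mono := by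
    rintro i j hij hi (hj | hj)
    · rcases hi with hi | hi
      exacts [g₂.E_mono hij hi hj, absurd (g₂.E_before hj (Or.inr (Or.inl hi))) hij.not_gt]
    · exact g₁.get_lt_of_lt_of_B hij (CH_B hj)
  B_mono := g₂.BH_mono
  C_anti hij hi hj := g₁.D_anti hij (tail_D hi) (tail_D hj)
  low_lt_high hi hj := by
    replace hj := hj.resolve_right id
    rcases hi with (hi | hi) | hi | hi
    exacts [g₂.E_lt_BH hi hj, g₂.CH_lt_BH hi hj, g₂.BT_lt_BH hi hj, g₂.CT_lt_BH hi hj]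
  D_lt_B h _ := h.elim

def ofLastCT (g₁ : G1Gridding l) (g₂ : G2Gridding l) {z b j : Fin l.length} (hz : ∀ i, i ≤ z)
    (hzD : g₁.D z) (hzCT : g₂.CT z) (hb : g₂.BH b) (hj : g₂.BT j) : G3Gridding l := by
  have tail_D : ∀ {w}, g₂.BT w ∨ g₂.CT w → g₁.D w := by
    intro w hw
    rcases eq_or_ne w z with rfl | hwz
    · exact hzD
    have hzw : l.get z < l.get w :=
      hw.elim (g₂.CT_lt_BT hzCT) fun h => g₂.CT_anti (lt_of_le_of_ne (hz w) hwz) h hzCT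
    refine (g₁.B_or_D_of_get_lt hzD hzw).resolve_left fun hB => ?_
    have hbw := g₁.get_lt_of_lt_of_B (g₂.head_before_tail (Or.inl hb) hw) hB
    rcases hw with h | h
    exacts [(g₂.BT_lt_BH h hb).not_gt hbw, (g₂.CT_lt_BH h hb).not_gt hbw]
  have CH_before_BH : ∀ {w b'}, g₂.CH w → g₂.BH b' → w < b' := by
    intro w b' hw hb'
    refine lt_of_not_ge fun hle => ?_
    have hlt : b' < w := lt_of_le_of_ne hle (by rintro rfl; exact (g₂.CH_lt_BH hw hb').false)
    rcases g₁.B_or_D_of_get_lt hzD (g₂.CT_lt_CH hzCT hw) with hB | hD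
    · exact (g₂.CH_lt_BH hw hb').not_gt (g₁.get_lt_of_lt_of_B hlt hB)
    · exact (g₂.CH_lt_BT hw hj).not_gt
        (g₁.D_anti (g₂.head_before_tail (Or.inr hw) (Or.inl hj)) hD (tail_D (Or.inl hj)))
  refine ofTailInD g₁ g₂ tail_D CH_before_BH fun {w} hw => ?_
  refine (g₁.B_or_D_of_get_lt hzD (g₂.CT_lt_CH hzCT hw)).resolve_right fun hD => ?_
  have hwb := CH_before_BH hw hb
  exact (g₂.CH_lt_BH hw hb).not_gt (g₁.D_anti hwb hD (g₁.D_of_le hD hwb.le))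

theorem nonempty_of_G1Gridding_of_G2Gridding (g₁ : G1Gridding l) (g₂ : G2Gridding l) :
    Nonempty (G3Gridding l) := by
  by_cases hD : ∃ d, g₁.D d
  swap
  · exact ⟨ofG1 g₁ (fun h => (hD ⟨_, h⟩).elim) fun h => (hD ⟨_, h⟩).elim⟩
  obtain ⟨d, hd⟩ := hD
  obtain ⟨z, hz⟩ : ∃ z : Fin l.length, ∀ i, i ≤ z :=
    ⟨⟨l.length - 1, by have := d.isLt; omega⟩, fun i => Fin.le_def.2 (Nat.le_sub_one_of_lt i.isLt)⟩
  have hzD := g₁.D_of_le hd (hz d)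
  by_cases hBH : ∃ b, g₂.BH b
  swap
  · exact ⟨ofG2OfNoBH g₂ fun i h => hBH ⟨i, h⟩⟩
  obtain ⟨b, hb⟩ := hBH
  by_cases hBT : ∃ j, g₂.BT j ∧ j ≠ z
  swap
  · exact ⟨ofG2OfBTLast g₂ fun hj => (not_not.1 fun h => hBT ⟨_, hj, h⟩) ▸ hz _⟩
  obtain ⟨j, hj, hjz⟩ := hBT
  rcases g₂.cover z with h | h | h | h | h
  · exact absurd (g₂.E_before h (Or.inr (Or.inr (Or.inl hj)))) (hz j).not_gt
  · exact absurd (g₂.head_before_tail (Or.inl h) (Or.inl hj)) (hz j).not_gt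
  · exact absurd (g₂.head_before_tail (Or.inr h) (Or.inl hj)) (hz j).not_gt
  · exact ⟨ofLastBT g₁ g₂ hz hzD h hb hj hjz⟩
  · exact ⟨ofLastCT g₁ g₂ hz hzD h hb hj⟩

end G3Gridding

noncomputable def frac (k : ℕ) : ℝ := k / (k + 1)

theorem frac_nonneg (k : ℕ) : 0 ≤ frac k := by unfold frac; positivity

theorem frac_lt_one (k : ℕ) : frac k < 1 := by
  unfold frac; rw [div_lt_one (by positivity)]; linarith

theorem frac_strictMono : StrictMono frac := by
  refine strictMono_nat_of_lt_succ fun k => ?_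
  unfold frac
  rw [div_lt_div_iff₀ (by positivity) (by positivity)]
  push_cast; nlinarith

namespace G3Gridding

variable {l : List ℕ} (g : G3Gridding l) {i j c : Fin l.length}

/- `A`-points share their heights with `C`-points, which are placed at heights `1 - frac (c + 1)`
by position `c`. The point `i ∈ A` goes into the gap of heights just above the first `C`-point
below it, at position `cut i` (`l.length` if there is none). -/
open Classical in
noncomputable def cut (i : Fin l.length) : ℕ :=
  (insert l.length ((Finset.univ.filter fun c => g.C c ∧ l.get c < l.get i).image Fin.val)).min'
    (Finset.insert_nonempty _ _)

theorem cut_le (hc : g.C c) (h : l.get c < l.get i) : g.cut i ≤ c := by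
  classical
  exact Finset.min'_le _ _ (Finset.mem_insert_of_mem (Finset.mem_image_of_mem _
    (Finset.mem_filter.2 ⟨Finset.mem_univ _, hc, h⟩)))

theorem lt_cut (hc : g.C c) (h : l.get i < l.get c) : (c : ℕ) < g.cut i := by
  classical
  refine (Finset.lt_min'_iff _ _).2 fun k hk => ?_
  rcases Finset.mem_insert.1 hk with rfl | hk
  · exact c.isLt
  obtain ⟨c', hc', rfl⟩ := Finset.mem_image.1 hk
  simp only [Finset.mem_filter, Finset.mem_univ, true_and] at hc'
  rcases lt_trichotomy c c' with hcc' | rfl | hcc'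
  · exact hcc'
  · exact absurd (hc'.2.trans h) (lt_irrefl _)
  · exact absurd (g.C_anti hcc' hc'.1 hc) (hc'.2.trans h).not_gt

theorem cut_anti (h : l.get i < l.get j) : g.cut j ≤ g.cut i := by
  classical
  refine Finset.min'_subset _ (Finset.insert_subset_insert _ (Finset.image_subset_image ?_))
  intro c hc
  simp only [Finset.mem_filter, Finset.mem_univ, true_and] at hc ⊢
  exact ⟨hc.1, hc.2.trans h⟩

noncomputable def aCoord (i : Fin l.length) : ℝ :=
  1 - frac (g.cut i + 1) + (frac (g.cut i + 1) - frac (g.cut i)) * frac (l.get i + 1)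

theorem aCoord_bounds (i : Fin l.length) :
    1 - frac (g.cut i + 1) < g.aCoord i ∧ g.aCoord i < 1 - frac (g.cut i) := by
  have hgap := frac_strictMono (Nat.lt_succ_self (g.cut i))
  have h0 : 0 < frac (l.get i + 1) := lt_of_le_of_ne (frac_nonneg _) (by unfold frac; positivity)
  have h1 := frac_lt_one (l.get i + 1)
  unfold aCoord
  constructor <;> nlinarith

theorem aCoord_lt_aCoord (h : l.get i < l.get j) : g.aCoord i < g.aCoord j := by
  rcases (g.cut_anti h).lt_or_eq with hlt | heq
  · have := frac_strictMono.monotone (Nat.succ_le_of_lt hlt)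
    linarith [(g.aCoord_bounds i).2, (g.aCoord_bounds j).1]
  · have hgap := frac_strictMono (Nat.lt_succ_self (g.cut i))
    have hv := frac_strictMono (Nat.succ_lt_succ h)
    unfold aCoord; rw [heq]
    nlinarith

theorem not_D_of_A (h : g.A i) : ¬ g.D i := fun hD => (g.A_before h (Or.inr (Or.inr hD))).false
theorem not_A_of_B (h : g.B i) : ¬ g.A i := fun hA => (g.A_before hA (Or.inl h)).false
theorem not_A_of_C (h : g.C i) : ¬ g.A i := fun hA => (g.A_before hA (Or.inr (Or.inl h))).false
theorem not_D_of_B (h : g.B i) : ¬ g.D i := fun hD => (g.before_D (Or.inr (Or.inl h)) hD).false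
theorem not_D_of_C (h : g.C i) : ¬ g.D i := fun hD => (g.before_D (Or.inr (Or.inr h)) hD).false
theorem not_B_of_C (h : g.C i) : ¬ g.B i := fun hB => (g.low_lt_high (Or.inr h) (Or.inl hB)).false

open Classical in
noncomputable def point (i : Fin l.length) : ℝ × ℝ :=
  if g.D i then (5 / 2, 3 / 2) else if g.A i then (g.aCoord i, g.aCoord i)
  else if g.B i then (1 + frac (i + 1), 2 + frac (i + 1)) else (1 + frac (i + 1), 1 - frac (i + 1))

theorem point_of_A (h : g.A i) : g.point i = (g.aCoord i, g.aCoord i) := by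
  simp [point, h, g.not_D_of_A h]
theorem point_of_B (h : g.B i) : g.point i = (1 + frac (i + 1), 2 + frac (i + 1)) := by
  simp [point, h, g.not_D_of_B h, g.not_A_of_B h]
theorem point_of_C (h : g.C i) : g.point i = (1 + frac (i + 1), 1 - frac (i + 1)) := by
  simp [point, g.not_D_of_C h, g.not_A_of_C h, g.not_B_of_C h]
theorem point_of_D (h : g.D i) : g.point i = (5 / 2, 3 / 2) := by
  simp [point, h]

theorem point_mem (i : Fin l.length) : g.point i ∈ G3fig := by
  have h0 := frac_nonneg (i + 1)
  have h1 := frac_lt_one (i + 1)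
  have ha := g.aCoord_bounds i
  have hc0 := frac_nonneg (g.cut i); have hc1 := frac_lt_one (g.cut i + 1)
  rw [mem_G3fig]
  rcases g.cover i with h | h | h | h
  · rw [g.point_of_A h]; exact Or.inl ⟨rfl, by linarith, by linarith⟩
  · rw [g.point_of_B h]; exact Or.inr (Or.inl ⟨by ring, by linarith, by linarith⟩)
  · rw [g.point_of_C h]; exact Or.inr (Or.inr (Or.inl ⟨by ring, by linarith, by linarith⟩))
  · rw [g.point_of_D h]; exact Or.inr (Or.inr (Or.inr rfl))

theorem A_of_lt (hij : i < j) (hj : g.A j) : g.A i := by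
  rcases g.cover i with hi | hi | hi | hi
  · exact hi
  all_goals exact absurd (g.A_before hj (by tauto)) hij.not_gt

theorem not_D_of_lt (hij : i < j) : ¬ g.D i := fun hi => by
  rcases g.cover j with hj | hj | hj | hj
  · exact (g.before_D (Or.inl hj) hi).not_gt hij
  · exact (g.before_D (Or.inr (Or.inl hj)) hi).not_gt hij
  · exact (g.before_D (Or.inr (Or.inr hj)) hi).not_gt hij
  · exact hij.ne (g.D_subsingleton hi hj)

theorem point_fst_of_B_or_C (h : g.B i ∨ g.C i) : (g.point i).1 = 1 + frac (i + 1) := by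
  rcases h with h | h
  · rw [g.point_of_B h]
  · rw [g.point_of_C h]

theorem point_fst_lt (hij : i < j) : (g.point i).1 < (g.point j).1 := by
  have hfrac : frac (i + 1) < frac (j + 1) := frac_strictMono (Nat.succ_lt_succ hij)
  have := frac_lt_one (i + 1)
  have := frac_nonneg (j + 1)
  have hi : g.A i ∨ g.B i ∨ g.C i := by have := g.cover i; have := g.not_D_of_lt hij; tauto
  rcases hi with hi | hi
  · have hx : (g.point i).1 < 1 := by
      rw [g.point_of_A hi]; linarith [(g.aCoord_bounds i).2, frac_nonneg (g.cut i)]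
    rcases g.cover j with hj | hj | hj | hj
    · rw [g.point_of_A hi, g.point_of_A hj]; exact g.aCoord_lt_aCoord (g.A_mono hij hi hj)
    · rw [g.point_of_B hj]; linarith
    · rw [g.point_of_C hj]; linarith
    · rw [g.point_of_D hj]; norm_num; linarith
  · rw [g.point_fst_of_B_or_C hi]
    rcases g.cover j with hj | hj | hj | hj
    · exact absurd (g.A_before hj (by tauto)) hij.not_gt
    · rw [g.point_of_B hj]; linarith
    · rw [g.point_of_C hj]; linarith
    · rw [g.point_of_D hj]; norm_num; linarith

theorem point_snd_lt (h : l.get i < l.get j) : (g.point i).2 < (g.point j).2 := by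
  have := frac_nonneg (i + 1); have := frac_lt_one (i + 1)
  have := frac_nonneg (j + 1); have := frac_lt_one (j + 1)
  rcases g.cover i with hi | hi | hi | hi <;> rcases g.cover j with hj | hj | hj | hj
  · rw [g.point_of_A hi, g.point_of_A hj]; exact g.aCoord_lt_aCoord h
  · rw [g.point_of_A hi, g.point_of_B hj]; linarith [(g.aCoord_bounds i).2, frac_nonneg (g.cut i)]
  · have := frac_strictMono.monotone (Nat.succ_le_of_lt (g.lt_cut hj h))
    rw [g.point_of_A hi, g.point_of_C hj]; linarith [(g.aCoord_bounds i).2]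
  · rw [g.point_of_A hi, g.point_of_D hj]; norm_num
    linarith [(g.aCoord_bounds i).2, frac_nonneg (g.cut i)]
  · exact absurd (g.low_lt_high (Or.inl hj) (Or.inl hi)) h.not_gt
  · rcases lt_trichotomy i j with hij | rfl | hji
    · rw [g.point_of_B hi, g.point_of_B hj]; simpa using frac_strictMono (Nat.succ_lt_succ hij)
    · exact absurd h (lt_irrefl _)
    · exact absurd (g.B_mono hji hj hi) h.not_gt
  · exact absurd (g.low_lt_high (Or.inr hj) (Or.inl hi)) h.not_gt
  · exact absurd (g.D_lt_B hj hi) h.not_gt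
  · have := frac_strictMono.monotone (Nat.succ_le_succ (g.cut_le hi h))
    rw [g.point_of_C hi, g.point_of_A hj]; linarith [(g.aCoord_bounds j).1]
  · rw [g.point_of_C hi, g.point_of_B hj]; linarith
  · rcases lt_trichotomy i j with hij | rfl | hji
    · exact absurd (g.C_anti hij hi hj) h.not_gt
    · exact absurd h (lt_irrefl _)
    · rw [g.point_of_C hi, g.point_of_C hj]; simpa using frac_strictMono (Nat.succ_lt_succ hji)
  · rw [g.point_of_C hi, g.point_of_D hj]; norm_num; linarith
  · exact absurd (g.low_lt_high (Or.inl hj) (Or.inr hi)) h.not_gt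
  · rw [g.point_of_D hi, g.point_of_B hj]; norm_num; linarith
  · exact absurd (g.low_lt_high (Or.inr hj) (Or.inr hi)) h.not_gt
  · exact absurd h (by rw [g.D_subsingleton hi hj]; exact lt_irrefl _)

theorem drawnOn (g : G3Gridding l) (hl : l.Nodup) : DrawnOn l G3fig := by
  refine ⟨g.point, g.point_mem, fun _ _ => g.point_fst_lt, fun i j => ⟨g.point_snd_lt, fun h => ?_⟩⟩
  rcases lt_trichotomy (l.get i) (l.get j) with hij | hij | hij
  · exact hij
  · rw [List.nodup_iff_injective_get.1 hl hij] at h; exact absurd h (lt_irrefl _)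
  · exact absurd (g.point_snd_lt hij) h.not_gt

end G3Gridding

/-- `G3 = G1 ∩ G2`. -/
theorem g3_eq_g1_inter_g2 (l : List ℕ) (hl : IsPermList l) :
    DrawnOn l G3fig ↔ DrawnOn l G1fig ∧ DrawnOn l G2fig := by
  have hnd : l.Nodup := hl.nodup_iff.2 List.nodup_range
  refine ⟨fun h => ⟨h.map_of_strictMono strictMono_toG1x strictMono_toG1y fun _ => toG1_mem,
    h.map_of_strictMono strictMono_toG2x strictMono_toG2y fun _ => toG2_mem⟩, ?_⟩
  rintro ⟨h₁, h₂⟩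
  obtain ⟨d₁⟩ := drawnOn_iff_nonempty_drawing.1 h₁
  obtain ⟨d₂⟩ := drawnOn_iff_nonempty_drawing.1 h₂
  obtain ⟨g⟩ := G3Gridding.nonempty_of_G1Gridding_of_G2Gridding (d₁.toG1Gridding hnd)
    (d₂.toG2Gridding hnd)
  exact g.drawnOn hnd
end

section
/- A permutation π avoiding both 3124 and 4312 is skew decomposable if and only if π = σ⊖τ where either σ is a nonempty increasing permutation and τ is a nonempty permutation avoiding 312, or σ is a skew indecomposable permutation avoiding both 3124 and 4312 and τ is a nonempty decreasing permutation. That is, the set of skew decomposable permutations in Av(3124,4312) equals (Av(21) ⊖ Av(312)) ∪ (Av_{skew-indecomposable}(3124,4312) ⊖ Av(12)), where both operands of each ⊖ range over nonempty permutations. -/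
/-!
A pattern occurs in `σ ⊖ τ` exactly when it splits as `p₁ ++ p₂`, with every entry of `p₁`
above every entry of `p₂`, `p₁` occurring in `σ` and `p₂` in `τ`; this is seen most easily
by reading an occurrence as an order-isomorphic sublist. Write a skew decomposable `π` as
`α ⊖ ρ` with `α` skew indecomposable. Since `4312 = 21 ⊖ 12 = 1 ⊖ 312`, either `α` contains
`21` and `ρ` avoids `12`, or `α` avoids `21` and `ρ` avoids `312`; and `α` inherits the
avoidance of `3124` and `4312` from `π`. Conversely, running through the splits of `3124`
and `4312` shows that both kinds of skew sums avoid the two patterns.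
-/

theorem List.exists_mem_zip_of_mem_left {α β : Type*} {l₁ : List α} {l₂ : List β}
    (h : l₁.length ≤ l₂.length) {a : α} (ha : a ∈ l₁) : ∃ x ∈ l₁.zip l₂, x.1 = a := by
  rw [← List.map_fst_zip h] at ha
  simpa using ha

def SameOrder (p s : List ℕ) : Prop :=
  p.length = s.length ∧ ∀ x ∈ p.zip s, ∀ y ∈ p.zip s, x.1 < y.1 ↔ x.2 < y.2

instance : DecidableRel SameOrder := fun _ _ => inferInstanceAs (Decidable (_ ∧ _))

theorem sameOrder_iff_getElem {p s : List ℕ} :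
    SameOrder p s ↔ ∃ h : p.length = s.length, ∀ i j (hi : i < p.length) (hj : j < p.length),
      p[i] < p[j] ↔ s[i] < s[j] := by
  have hmem : ∀ x, x ∈ p.zip s ↔
      ∃ i, ∃ (hi : i < p.length) (hs : i < s.length), (p[i], s[i]) = x := by
    intro x
    simp only [List.mem_iff_getElem, List.length_zip, List.getElem_zip, Nat.lt_min]
    exact ⟨fun ⟨i, ⟨hi, hs⟩, h⟩ => ⟨i, hi, hs, h⟩, fun ⟨i, hi, hs, h⟩ => ⟨i, ⟨hi, hs⟩, h⟩⟩
  refine ⟨fun ⟨hlen, h⟩ => ⟨hlen, fun i j hi hj => ?_⟩, fun ⟨hlen, h⟩ => ⟨hlen, ?_⟩⟩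
  · exact h _ ((hmem _).2 ⟨i, hi, hlen ▸ hi, rfl⟩) _ ((hmem _).2 ⟨j, hj, hlen ▸ hj, rfl⟩)
  · rintro _ hx _ hy
    obtain ⟨i, hi, -, rfl⟩ := (hmem _).1 hx
    obtain ⟨j, hj, -, rfl⟩ := (hmem _).1 hy
    exact h i j hi hj

theorem contains_iff_exists_sublist {l p : List ℕ} :
    Contains l p ↔ ∃ s, s.Sublist l ∧ SameOrder p s := by
  constructor
  · rintro ⟨f, hf, hiso⟩
    refine ⟨List.ofFn fun i => l.get (f i), ?_, ?_⟩
    · have hlen : (List.ofFn fun i => l.get (f i)).length = p.length := List.length_ofFn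
      exact List.sublist_iff_exists_fin_orderEmbedding_get_eq.2
        ⟨OrderEmbedding.ofStrictMono (fun i => f (Fin.cast hlen i))
          (hf.comp (Fin.cast_strictMono hlen)), fun i => by simp [Fin.cast]⟩
    · refine sameOrder_iff_getElem.2 ⟨by simp, fun i j hi hj => ?_⟩
      simpa using hiso ⟨i, hi⟩ ⟨j, hj⟩
  · rintro ⟨s, hs, hso⟩
    obtain ⟨hlen, hiso⟩ := sameOrder_iff_getElem.1 hso
    obtain ⟨f, hf⟩ := List.sublist_iff_exists_fin_orderEmbedding_get_eq.1 hs
    refine ⟨fun i => f (Fin.cast hlen i), f.strictMono.comp (Fin.cast_strictMono _),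
      fun a b => ?_⟩
    simp only [← hf, List.get_eq_getElem, Fin.val_cast]
    exact hiso a b a.isLt b.isLt

instance (l p : List ℕ) : Decidable (Contains l p) :=
  decidable_of_iff (∃ s ∈ l.sublists, SameOrder p s) <| by
    simp only [List.mem_sublists, contains_iff_exists_sublist]

theorem sameOrder_append_iff {p₁ p₂ s₁ s₂ : List ℕ} (h : p₁.length = s₁.length)
    (hs : ∀ u ∈ s₁, ∀ v ∈ s₂, v < u) :
    SameOrder (p₁ ++ p₂) (s₁ ++ s₂) ↔
      SameOrder p₁ s₁ ∧ SameOrder p₂ s₂ ∧ ∀ x ∈ p₁, ∀ y ∈ p₂, y < x := by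
  have hcross : ∀ x ∈ p₁.zip s₁, ∀ y ∈ p₂.zip s₂, y.2 < x.2 := fun x hx y hy =>
    hs _ (List.of_mem_zip hx).2 _ (List.of_mem_zip hy).2
  simp only [SameOrder, List.length_append, List.zip_append h, List.mem_append]
  constructor
  · rintro ⟨hlen, hall⟩
    have hlen₂ : p₂.length = s₂.length := by omega
    refine ⟨⟨h, fun x hx y hy => hall x (.inl hx) y (.inl hy)⟩,
      ⟨hlen₂, fun x hx y hy => hall x (.inr hx) y (.inr hy)⟩, fun a ha b hb => ?_⟩
    obtain ⟨x, hx, rfl⟩ := List.exists_mem_zip_of_mem_left h.le ha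
    obtain ⟨y, hy, rfl⟩ := List.exists_mem_zip_of_mem_left hlen₂.le hb
    exact (hall y (.inr hy) x (.inl hx)).2 (hcross x hx y hy)
  · rintro ⟨⟨-, h₁⟩, ⟨hlen₂, h₂⟩, hp⟩
    refine ⟨by omega, ?_⟩
    rintro x (hx | hx) y (hy | hy)
    · exact h₁ x hx y hy
    · exact iff_of_false (lt_asymm (hp _ (List.of_mem_zip hx).1 _ (List.of_mem_zip hy).1))
        (lt_asymm (hcross x hx y hy))
    · exact iff_of_true (hp _ (List.of_mem_zip hy).1 _ (List.of_mem_zip hx).1)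
        (hcross y hy x hx)
    · exact h₂ x hx y hy

theorem sameOrder_map_add_right {p s : List ℕ} (c : ℕ) :
    SameOrder p (s.map (· + c)) ↔ SameOrder p s := by
  simp only [SameOrder, List.length_map, List.zip_map_right, List.forall_mem_map, Prod.map_fst,
    Prod.map_snd, id, add_lt_add_iff_right]

theorem Contains.trans {l p q : List ℕ} (h₁ : Contains l p) (h₂ : Contains p q) :
    Contains l q := by
  obtain ⟨f, hf, hfp⟩ := h₁
  obtain ⟨g, hg, hgq⟩ := h₂
  exact ⟨f ∘ g, hf.comp hg, fun a b => (hgq a b).trans (hfp (g a) (g b))⟩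

theorem contains_nil (l : List ℕ) : Contains l [] :=
  contains_iff_exists_sublist.2 ⟨[], List.nil_sublist l, by decide⟩

theorem contains_singleton {l : List ℕ} (hl : l ≠ []) (x : ℕ) : Contains l [x] := by
  obtain ⟨a, l', rfl⟩ := List.exists_cons_of_ne_nil hl
  exact contains_iff_exists_sublist.2
    ⟨[a], List.singleton_sublist.2 List.mem_cons_self, by simp [SameOrder]⟩

theorem IsPermList.lt_length {l : List ℕ} (hl : IsPermList l) : ∀ x ∈ l, x < l.length :=
  fun _ hx => List.mem_range.1 (hl.subset hx)

theorem length_pskew (σ τ : List ℕ) : (pskew σ τ).length = σ.length + τ.length := by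
  simp [pskew]

theorem pskew_ne_nil (σ : List ℕ) {τ : List ℕ} (hτ : τ ≠ []) : pskew σ τ ≠ [] := by
  simp [pskew, hτ]

theorem pskew_assoc (a b c : List ℕ) : pskew (pskew a b) c = pskew a (pskew b c) := by
  simp [pskew, Function.comp_def, Nat.add_assoc]

theorem isPermList_pskew {σ τ : List ℕ} (hσ : IsPermList σ) (hτ : IsPermList τ) :
    IsPermList (pskew σ τ) := by
  have hrange : List.range (pskew σ τ).length =
      List.range τ.length ++ (List.range σ.length).map (· + τ.length) := by
    rw [length_pskew, Nat.add_comm, List.range_add]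
    simp only [Nat.add_comm τ.length]
  rw [IsPermList, hrange]
  exact List.perm_append_comm.trans (hτ.append (hσ.map _))

theorem contains_pskew_iff {σ τ p : List ℕ} (hτ : ∀ x ∈ τ, x < τ.length) :
    Contains (pskew σ τ) p ↔ ∃ p₁ p₂, p = p₁ ++ p₂ ∧ (∀ x ∈ p₁, ∀ y ∈ p₂, y < x) ∧
      Contains σ p₁ ∧ Contains τ p₂ := by
  have hs : ∀ {s₁ s₂ : List ℕ}, s₂.Sublist τ → ∀ u ∈ s₁.map (· + τ.length), ∀ v ∈ s₂, v < u := by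
    intro s₁ s₂ hs₂ u hu v hv
    obtain ⟨a, -, rfl⟩ := List.mem_map.1 hu
    exact (hτ v (hs₂.subset hv)).trans_le (Nat.le_add_left _ _)
  simp only [pskew, contains_iff_exists_sublist, List.sublist_append_iff, List.sublist_map_iff]
  constructor
  · rintro ⟨_, ⟨_, s₂, rfl, ⟨s₁, hs₁, rfl⟩, hs₂⟩, hso⟩
    have hlen : s₁.length ≤ p.length := by simpa using hso.1.ge.trans' (by simp)
    rw [← List.take_append_drop s₁.length p, sameOrder_append_iff (by simpa using hlen) (hs hs₂),
      sameOrder_map_add_right] at hso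
    exact ⟨_, _, (List.take_append_drop _ _).symm, hso.2.2, ⟨s₁, hs₁, hso.1⟩, ⟨s₂, hs₂, hso.2.1⟩⟩
  · rintro ⟨p₁, p₂, rfl, hp, ⟨s₁, hs₁, h₁⟩, ⟨s₂, hs₂, h₂⟩⟩
    refine ⟨s₁.map (· + τ.length) ++ s₂, ⟨_, _, rfl, ⟨s₁, hs₁, rfl⟩, hs₂⟩, ?_⟩
    rw [sameOrder_append_iff (by simpa using h₁.1) (hs hs₂), sameOrder_map_add_right]
    exact ⟨h₁, h₂, hp⟩

theorem Contains.pskew_left {σ τ p : List ℕ} (hτ : ∀ x ∈ τ, x < τ.length) (h : Contains σ p) :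
    Contains (pskew σ τ) p :=
  (contains_pskew_iff hτ).2 ⟨p, [], by simp, by simp, h, contains_nil τ⟩

-- The hypothesis on `p` is decidable, so for a concrete pattern it is discharged by `decide`.
theorem avoids_pskew {σ τ a b p : List ℕ} (hτ : ∀ x ∈ τ, x < τ.length) (hσa : Avoids σ a)
    (hτb : Avoids τ b)
    (hp : ∀ k ≤ p.length, (∀ x ∈ p.take k, ∀ y ∈ p.drop k, y < x) →
      Contains (p.take k) a ∨ Contains (p.drop k) b) :
    Avoids (pskew σ τ) p := by
  rintro h
  obtain ⟨p₁, p₂, rfl, hcross, h₁, h₂⟩ := (contains_pskew_iff hτ).1 h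
  have hsplit := hp p₁.length (by simp)
  simp only [List.take_left, List.drop_left] at hsplit
  rcases hsplit hcross with ha | hb
  · exact hσa (h₁.trans ha)
  · exact hτb (h₂.trans hb)

theorem exists_not_skewDecomposable_pskew_eq {σ τ : List ℕ} (hσ : IsPermList σ) (hσ₀ : σ ≠ [])
    (hτ : IsPermList τ) (hτ₀ : τ ≠ []) :
    ∃ α ρ, IsPermList α ∧ α ≠ [] ∧ ¬ SkewDecomposable α ∧ IsPermList ρ ∧ ρ ≠ [] ∧
      pskew σ τ = pskew α ρ := by
  by_cases hσd : SkewDecomposable σ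
  · obtain ⟨a, b, ha, hb, ha₀, hb₀, rfl⟩ := hσd
    have : a.length < (pskew a b).length := by
      simp [length_pskew, List.length_pos_iff.2 hb₀]
    obtain ⟨α, ρ, hα, hα₀, hαd, hρ, hρ₀, heq⟩ :=
      exists_not_skewDecomposable_pskew_eq ha ha₀ (isPermList_pskew hb hτ) (pskew_ne_nil b hτ₀)
    exact ⟨α, ρ, hα, hα₀, hαd, hρ, hρ₀, by rw [pskew_assoc, heq]⟩
  · exact ⟨σ, τ, hσ, hσ₀, hσd, hτ, hτ₀, rfl⟩
termination_by σ.length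

theorem avoids_21_and_312_or_avoids_12_of_avoids_pskew_4312 {α ρ : List ℕ} (hα : α ≠ [])
    (hρ : ∀ x ∈ ρ, x < ρ.length) (h : Avoids (pskew α ρ) [3,2,0,1]) :
    (Avoids α [1,0] ∧ Avoids ρ [2,0,1]) ∨ Avoids ρ [0,1] := by
  rw [Avoids, contains_pskew_iff hρ] at h
  by_cases h21 : Contains α [1,0]
  · exact .inr fun h12 => h ⟨[3,2], [0,1], rfl, by decide, h21.trans (by decide), h12⟩
  · exact .inl ⟨h21, fun h312 =>
      h ⟨[3], [2,0,1], rfl, by decide, contains_singleton hα 3, h312.trans (by decide)⟩⟩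

/-- structure of the skew decomposable permutations in
`Av(3124, 4312)`. -/
theorem skew_decomposable_structure :
    {l : List ℕ | IsPermList l ∧ Avoids l [2,0,1,3] ∧ Avoids l [3,2,0,1] ∧
      SkewDecomposable l}
    = {l : List ℕ |
        (∃ σ τ : List ℕ, IsPermList σ ∧ σ ≠ [] ∧ Avoids σ [1,0] ∧
          IsPermList τ ∧ τ ≠ [] ∧ Avoids τ [2,0,1] ∧ l = pskew σ τ) ∨
        (∃ σ τ : List ℕ, IsPermList σ ∧ σ ≠ [] ∧ Avoids σ [2,0,1,3] ∧ Avoids σ [3,2,0,1] ∧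
          ¬ SkewDecomposable σ ∧ IsPermList τ ∧ τ ≠ [] ∧ Avoids τ [0,1] ∧
          l = pskew σ τ)} := by
  ext l
  constructor
  · rintro ⟨-, h3124, h4312, σ, τ, hσ, hτ, hσ₀, hτ₀, rfl⟩
    obtain ⟨α, ρ, hα, hα₀, hαd, hρ, hρ₀, heq⟩ :=
      exists_not_skewDecomposable_pskew_eq hσ hσ₀ hτ hτ₀
    rw [heq] at h3124 h4312 ⊢
    rcases avoids_21_and_312_or_avoids_12_of_avoids_pskew_4312 hα₀ hρ.lt_length h4312 with
      ⟨h21, h312⟩ | h12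
    · exact .inl ⟨α, ρ, hα, hα₀, h21, hρ, hρ₀, h312, rfl⟩
    · exact .inr ⟨α, ρ, hα, hα₀, fun h => h3124 (h.pskew_left hρ.lt_length),
        fun h => h4312 (h.pskew_left hρ.lt_length), hαd, hρ, hρ₀, h12, rfl⟩
  · rintro (⟨σ, τ, hσ, hσ₀, h21, hτ, hτ₀, h312, rfl⟩ |
      ⟨σ, τ, hσ, hσ₀, h3124, h4312, -, hτ, hτ₀, h12, rfl⟩)
    · exact ⟨isPermList_pskew hσ hτ, avoids_pskew hτ.lt_length h21 h312 (by decide),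
        avoids_pskew hτ.lt_length h21 h312 (by decide), σ, τ, hσ, hτ, hσ₀, hτ₀, rfl⟩
    · exact ⟨isPermList_pskew hσ hτ, avoids_pskew hτ.lt_length h3124 h12 (by decide),
        avoids_pskew hτ.lt_length h4312 h12 (by decide), σ, τ, hσ, hτ, hσ₀, hτ₀, rfl⟩
end
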